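/- The map T̂₂ : (ℂ \ {0})³ → (ℂ \ {0})³ defined by T̂₂(x,y,z) = (y·z⁻¹, x·z, z) satisfies the tetrahedron equation T¹²³ ∘ T¹⁴⁵ ∘ T²⁴⁶ ∘ T³⁵⁶ = T³⁵⁶ ∘ T²⁴⁶ ∘ T¹⁴⁵ ∘ T¹²³, is involutive (T̂₂ ∘ T̂₂ = id), and the functions I₃(x,y,z) = z and I₄(x,y,z) = x·y are invariants of T̂₂ (Iⱼ ∘ T̂₂ = Iⱼ). -/

import Mathlib

section Tetra

variable {X : Type*}

/-- `T` acting on factors 1,2,3 of `X⁶`. -/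
def lift123 (T : X × X × X → X × X × X) :
    X × X × X × X × X × X → X × X × X × X × X × X
  | (a, b, c, d, e, f) =>
    match T (a, b, c) with
    | (a', b', c') => (a', b', c', d, e, f)

/-- `T` acting on factors 1,4,5 of `X⁶`. -/
def lift145 (T : X × X × X → X × X × X) :
    X × X × X × X × X × X → X × X × X × X × X × X
  | (a, b, c, d, e, f) =>
    match T (a, d, e) with
    | (a', d', e') => (a', b, c, d', e', f)

/-- `T` acting on factors 2,4,6 of `X⁶`. -/
def lift246 (T : X × X × X → X × X × X) :
    X × X × X × X × X × X → X × X × X × X × X × X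
  | (a, b, c, d, e, f) =>
    match T (b, d, f) with
    | (b', d', f') => (a, b', c, d', e, f')

/-- `T` acting on factors 3,5,6 of `X⁶`. -/
def lift356 (T : X × X × X → X × X × X) :
    X × X × X × X × X × X → X × X × X × X × X × X
  | (a, b, c, d, e, f) =>
    match T (c, e, f) with
    | (c', e', f') => (a, b, c', d, e', f')

/-- The Zamolodchikov tetrahedron equation for a map `T : X³ → X³`. -/
def IsTetrahedronMap (T : X × X × X → X × X × X) : Prop :=
  lift123 T ∘ lift145 T ∘ lift246 T ∘ lift356 T =
    lift356 T ∘ lift246 T ∘ lift145 T ∘ lift123 T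

end Tetra

/-- The map `T̂₂(x,y,z) = (y·z⁻¹, x·z, z)` on `(ℂ \ {0})³`. -/
def Th2 : ℂˣ × ℂˣ × ℂˣ → ℂˣ × ℂˣ × ℂˣ := fun (x, y, z) => (y * z⁻¹, x * z, z)

/-- The invariant `I₃(x,y,z) = z`. -/
def I3 : ℂˣ × ℂˣ × ℂˣ → ℂ := fun (_, _, z) => (z : ℂ)

/-- The invariant `I₄(x,y,z) = x·y`. -/
def I4 : ℂˣ × ℂˣ × ℂˣ → ℂ := fun (x, y, _) => (x : ℂ) * (y : ℂ)

theorem Th2_tetrahedron_involutive_invariants :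
    IsTetrahedronMap Th2 ∧ (Th2 ∘ Th2 = id) ∧ (I3 ∘ Th2 = I3) ∧ (I4 ∘ Th2 = I4) := by
  refine ⟨?_, ?_, ?_, ?_⟩
  · funext ⟨a,b,c,d,e,f⟩
    simp only [Function.comp, lift123, lift145, lift246, lift356, Th2]
    simp only [Prod.mk.injEq]
    repeat' apply And.intro
    all_goals group
  · funext ⟨x,y,z⟩
    show Th2 (Th2 (x, y, z)) = (x, y, z)
    simp [Th2, mul_assoc]
  · funext ⟨x,y,z⟩; rfl
  · funext ⟨x,y,z⟩
    simp only [Function.comp, Th2, I4]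
    push_cast
    field_simp
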